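/- Let X be a continuous process with running maximum X̄_t = max_{0≤u≤t} X_u, and let h : [x,∞) → ℝ. Define V_t = X_t - h(X̄_t). Then the running maximum of V satisfies V̄_t = X̄_t - h(X̄_t) for all t, provided 0 ≤ h(u) ≤ u - x, h(x) = 0, and u ↦ u - h(u) is nondecreasing; consequently the drawdown processes agree: V̄_t - V_t = X̄_t - X_t for all t. -/
import Mathlib


open Set

/-- If `X` is a continuous path started at `x` with running maximum
`X̄ t = sup_{0 ≤ u ≤ t} X u`, and `V t = X t - h (X̄ t)` with `h x = 0`,
`0 ≤ h u ≤ u - x`, and `u ↦ u - h u` nondecreasing, then the running maximum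
of `V` is `V̄ t = X̄ t - h (X̄ t)`, and the drawdowns agree:
`V̄ t - V t = X̄ t - X t`. -/
theorem stmt_10 (x : ℝ) (X : ℝ → ℝ) (hX : Continuous X) (hX0 : X 0 = x)
    (h : ℝ → ℝ) (hhx : h x = 0)
    (hh : ∀ u, x ≤ u → 0 ≤ h u ∧ h u ≤ u - x)
    (hmono : MonotoneOn (fun u => u - h u) (Set.Ici x))
    (M V : ℝ → ℝ)
    (hM : M = fun t => sSup (X '' Set.Icc 0 t))
    (hV : V = fun t => X t - h (M t)) :
    ∀ t, 0 ≤ t →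
      sSup (V '' Set.Icc 0 t) = M t - h (M t) ∧
      sSup (V '' Set.Icc 0 t) - V t = M t - X t := by
  have hMeq : ∀ u, M u = sSup (X '' Set.Icc 0 u) := fun u => by rw [hM]
  have hVeq : ∀ u, V u = X u - h (M u) := fun u => by rw [hV]
  have hXle : ∀ u : ℝ, 0 ≤ u → ∀ s ∈ Set.Icc (0:ℝ) u, X s ≤ M u := by
    intro u hu s hs
    rw [hMeq]
    exact le_csSup (isCompact_Icc.image hX).bddAbove (mem_image_of_mem X hs)
  have hxM : ∀ u : ℝ, 0 ≤ u → x ≤ M u := by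
    intro u hu
    have := hXle u hu 0 ⟨le_refl 0, hu⟩
    rwa [hX0] at this
  have hMmono : ∀ u v : ℝ, 0 ≤ u → u ≤ v → M u ≤ M v := by
    intro u v hu huv
    rw [hMeq u]
    refine csSup_le (by exact ⟨X 0, mem_image_of_mem X ⟨le_refl 0, hu⟩⟩) ?_
    rintro y ⟨s, hs, rfl⟩
    exact hXle v (hu.trans huv) s ⟨hs.1, hs.2.trans huv⟩
  intro t ht
  obtain ⟨s, hsI, hsmax⟩ := isCompact_Icc.exists_isMaxOn ⟨0, le_refl 0, ht⟩
    hX.continuousOn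
  have hMt : M t = X s := by
    refine le_antisymm ?_ (hXle t ht s hsI)
    rw [hMeq]
    refine csSup_le ⟨X 0, mem_image_of_mem X ⟨le_refl 0, ht⟩⟩ ?_
    rintro y ⟨u, hu, rfl⟩
    exact hsmax hu
  have hMs : M s = M t := by
    refine le_antisymm (hMmono s t hsI.1 hsI.2) ?_
    rw [hMt]
    exact hXle s hsI.1 s ⟨hsI.1, le_refl s⟩
  have hub : ∀ u ∈ Set.Icc (0:ℝ) t, V u ≤ M t - h (M t) := by
    intro u hu
    rw [hVeq]
    calc X u - h (M u) ≤ M u - h (M u) := by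
          have := hXle u hu.1 u ⟨hu.1, le_refl u⟩
          linarith
      _ ≤ M t - h (M t) :=
          hmono (hxM u hu.1) (hxM t ht) (hMmono u t hu.1 hu.2)
  have hVs : V s = M t - h (M t) := by rw [hVeq, hMs, hMt]
  have hsup : sSup (V '' Set.Icc 0 t) = M t - h (M t) := by
    refine le_antisymm (csSup_le ⟨V 0, mem_image_of_mem V ⟨le_refl 0, ht⟩⟩ ?_) ?_
    · rintro y ⟨u, hu, rfl⟩; exact hub u hu
    · rw [← hVs]
      refine le_csSup ⟨M t - h (M t), ?_⟩ (mem_image_of_mem V hsI)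
      rintro y ⟨u, hu, rfl⟩; exact hub u hu
  refine ⟨hsup, ?_⟩
  rw [hsup, hVeq]
  ring
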